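/- arXiv:2507.04485 — 6 statements merged into one kernel-verified Lean document; each statement's English description precedes it below -/
import Mathlib

section
/- Let π be an n-profile with optimal two-facility cost C = OPT(π). Define h₁ as the unique x ≥ π₁ with Σᵢ max(0, x − πᵢ) = C and h₂ as the unique x ≤ πₙ with Σᵢ max(0, πᵢ − x) = C, and set g₁ = min(h₁, mean(π)), g₂ = max(h₂, mean(π)). Then g₁ = mean(π) if and only if g₂ = mean(π). -/
/-!
Write `F x = ∑ i, max 0 (x - π i)` and `G x = ∑ i, max 0 (π i - x)`. Since `F x - G x = ∑ i, (x - π i)`,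
the two agree at the mean `m`. Moreover `F` is nondecreasing and strictly increasing from `π 0` on, and
`G` is nonincreasing and strictly decreasing up to `π (n - 1)`. Hence `m ≤ h₁ ↔ F m ≤ C ↔ G m ≤ C ↔ h₂ ≤ m`,
and the two conditions of the theorem say exactly `m ≤ h₁` and `h₂ ≤ m`.
-/

noncomputable def cost1 {n : ℕ} (π : Fin n → ℝ) (a b : ℝ) : ℝ :=
  ∑ i, min |π i - a| |π i - b|

open Finset

section DeviationSums

variable {ι : Type*} [Fintype ι] (π : ι → ℝ)

theorem sum_max_zero_mean_sub_eq_sum_max_zero_sub_mean (m : ℝ)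
    (hm : m = (∑ i, π i) / Fintype.card ι) :
    ∑ i, max 0 (m - π i) = ∑ i, max 0 (π i - m) := by
  have hdiff (a : ℝ) : max 0 a - max 0 (-a) = a := by
    rw [max_comm, max_comm 0, max_zero_sub_max_neg_zero_eq_self]
  have hmean : ∑ i, (m - π i) = 0 := by
    rw [sum_sub_distrib, sum_const, card_univ, nsmul_eq_mul, hm,
      ← Fintype.expect_eq_sum_div_card, Fintype.card_mul_expect, sub_self]
  refine sub_eq_zero.1 (.trans ?_ hmean)
  rw [← sum_sub_distrib]
  exact sum_congr rfl fun i _ => by simpa only [neg_sub] using hdiff (m - π i)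

variable {π}

theorem sum_max_zero_const_sub_le_iff {j : ι} {x y : ℝ} (hy : π j ≤ y) :
    ∑ i, max 0 (x - π i) ≤ ∑ i, max 0 (y - π i) ↔ x ≤ y := by
  refine ⟨fun hle => ?_, fun hxy => sum_le_sum fun i _ => by gcongr⟩
  by_contra! hyx
  refine hle.not_gt (sum_lt_sum (fun i _ => by gcongr) ⟨j, mem_univ j, ?_⟩)
  rw [max_eq_right (sub_nonneg.2 hy)]
  exact lt_max_of_lt_right (by linarith)

theorem sum_max_zero_sub_const_le_iff {j : ι} {x y : ℝ} (hy : y ≤ π j) :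
    ∑ i, max 0 (π i - x) ≤ ∑ i, max 0 (π i - y) ↔ y ≤ x := by
  simpa only [neg_sub_neg, neg_le_neg_iff] using
    sum_max_zero_const_sub_le_iff (π := fun i => -π i) (x := -x) (neg_le_neg hy)

end DeviationSums

theorem stmt5 {n : ℕ} (hn : 2 ≤ n) (π : Fin n → ℝ) (C : ℝ)
    (h1 h2 : ℝ)
    (hh1 : π ⟨0, by omega⟩ ≤ h1 ∧ (∑ i, max 0 (h1 - π i)) = C)
    (hh2 : h2 ≤ π ⟨n - 1, by omega⟩ ∧ (∑ i, max 0 (π i - h2)) = C) :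
    (min h1 ((∑ i, π i) / n) = (∑ i, π i) / n ↔
     max h2 ((∑ i, π i) / n) = (∑ i, π i) / n) := by
  obtain ⟨h1_ge, h1_sum⟩ := hh1
  obtain ⟨h2_le, h2_sum⟩ := hh2
  have hFG := sum_max_zero_mean_sub_eq_sum_max_zero_sub_mean π ((∑ i, π i) / n)
    (by rw [Fintype.card_fin])
  rw [min_eq_right_iff, max_eq_right_iff, ← sum_max_zero_const_sub_le_iff h1_ge, h1_sum, hFG,
    ← h2_sum, sum_max_zero_sub_const_le_iff h2_le]
end

section
/- Mechanism M₃ is 3-approximate: for any n-profile π, letting σ = (σ₁, σ₂) be the lexicographically first optimal 1-D solution with served counts s₁ = |S₁|, s₂ = |S₂|, the 2-D solution τ with τ_ℓ = (σ_ℓ, OPT(π)/s_ℓ) satisfies cost(π, τ) ≤ 3·OPT(π). (If π is trivial, τ₂ has second coordinate 0.) -/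
open scoped Classical

noncomputable def dpt (x : ℝ) (p : ℝ × ℝ) : ℝ := |x - p.1| + |p.2|

noncomputable def dsol (x : ℝ) (τ : (ℝ × ℝ) × (ℝ × ℝ)) : ℝ :=
  min (dpt x τ.1) (dpt x τ.2)

noncomputable def cost {n : ℕ} (π : Fin n → ℝ) (τ : (ℝ × ℝ) × (ℝ × ℝ)) : ℝ :=
  ∑ i, dsol (π i) τ

def lexLE (p q : ℝ × ℝ) : Prop := p.1 < q.1 ∨ (p.1 = q.1 ∧ p.2 ≤ q.2)

def LexOpt {n : ℕ} (π : Fin n → ℝ) (σ : ℝ × ℝ) : Prop :=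
  σ.1 ≤ σ.2 ∧ (∀ a b : ℝ, a ≤ b → cost1 π σ.1 σ.2 ≤ cost1 π a b) ∧
  (∀ a b : ℝ, a ≤ b → cost1 π a b = cost1 π σ.1 σ.2 → lexLE σ (a, b))

/-!
σ is 1-D optimal (lexicographic optimality in the non-trivial case, a zero-cost median in the trivial
one), so its 1-D cost is OPT. Each agent in S₁ pays at most its 1-D distance to σ₁ plus OPT/s₁, and
similarly for S₂; summing, the 1-D costs add up to OPT and each penalty term to at most OPT
(to 0 if the group is empty, as x / 0 = 0 in Lean).
-/

theorem cost1_nonneg {n : ℕ} (π : Fin n → ℝ) (a b : ℝ) : 0 ≤ cost1 π a b :=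
  Finset.sum_nonneg fun _ _ => le_min (abs_nonneg _) (abs_nonneg _)

theorem cost1_eq_zero_of_forall_eq {n : ℕ} (π : Fin n → ℝ) (c : ℝ) (h : ∀ i, π i = c) :
    cost1 π c c = 0 :=
  Finset.sum_eq_zero fun i _ => by simp [h i]

section IsLeast

variable {n : ℕ} {π : Fin n → ℝ} {C : ℝ}
  (hC : IsLeast {c : ℝ | ∃ a b : ℝ, a ≤ b ∧ cost1 π a b = c} C)
include hC

theorem nonneg_of_isLeast_cost1 : 0 ≤ C := by
  obtain ⟨a, b, -, rfl⟩ := hC.1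
  exact cost1_nonneg π a b

theorem cost1_eq_of_isLeast_of_le {a b : ℝ} (hab : a ≤ b) (h : cost1 π a b ≤ C) :
    cost1 π a b = C :=
  le_antisymm h (hC.2 ⟨a, b, hab, rfl⟩)

theorem LexOpt.cost1_eq_of_isLeast {σ : ℝ × ℝ} (hσ : LexOpt π σ) : cost1 π σ.1 σ.2 = C := by
  obtain ⟨a, b, hab, rfl⟩ := hC.1
  exact cost1_eq_of_isLeast_of_le hC hσ.1 (hσ.2.1 a b hab)

end IsLeast

theorem dsol_le_min_add (x a b u v : ℝ) :
    dsol x ((a, u), (b, v)) ≤ min |x - a| |x - b| + if |x - a| ≤ |x - b| then |u| else |v| := by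
  split_ifs with h
  · rw [min_eq_left h]
    exact min_le_left _ _
  · rw [min_eq_right (not_le.mp h).le]
    exact min_le_right _ _

theorem cost_le_cost1_add {n : ℕ} (π : Fin n → ℝ) (a b u v : ℝ) :
    cost π ((a, u), (b, v)) ≤ cost1 π a b
      + (Finset.univ.filter (fun i => |π i - a| ≤ |π i - b|)).card * |u|
      + ((n - (Finset.univ.filter (fun i => |π i - a| ≤ |π i - b|)).card : ℕ) : ℝ) * |v| := by
  have hcard : n - (Finset.univ.filter (fun i => |π i - a| ≤ |π i - b|)).card
      = (Finset.univ.filter (fun i => ¬|π i - a| ≤ |π i - b|)).card := by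
    have := Finset.card_filter_add_card_filter_not (s := Finset.univ)
      (fun i : Fin n => |π i - a| ≤ |π i - b|)
    rw [Finset.card_univ, Fintype.card_fin] at this
    omega
  calc cost π ((a, u), (b, v))
      ≤ ∑ i, (min |π i - a| |π i - b| + if |π i - a| ≤ |π i - b| then |u| else |v|) :=
        Finset.sum_le_sum fun i _ => dsol_le_min_add _ _ _ _ _
    _ = _ := by
        rw [Finset.sum_add_distrib, Finset.sum_ite, Finset.sum_const, Finset.sum_const,
          nsmul_eq_mul, nsmul_eq_mul, cost1, add_assoc, hcard]

theorem natCast_mul_div_le (k : ℕ) {C : ℝ} (hC : 0 ≤ C) : (k : ℝ) * (C / k) ≤ C := by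
  rcases Nat.eq_zero_or_pos k with rfl | hk
  · simpa using hC
  · rw [mul_div_cancel₀ C (Nat.cast_ne_zero.mpr hk.ne')]

theorem stmt12 {n : ℕ} (hn : 1 ≤ n) (π : Fin n → ℝ)
    (C : ℝ) (hC : IsLeast {c : ℝ | ∃ a b : ℝ, a ≤ b ∧ cost1 π a b = c} C)
    (σ : ℝ × ℝ)
    (hσnt : (∃ i j, π i ≠ π j) → LexOpt π σ)
    (hσt : (∀ i j, π i = π j) →
      σ = (π ⟨(n - 1) / 2, by omega⟩, π ⟨(n - 1) / 2, by omega⟩))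
    (s1 s2 : ℕ)
    (hs1 : s1 = (Finset.univ.filter (fun i : Fin n => |π i - σ.1| ≤ |π i - σ.2|)).card)
    (hs2 : s2 = n - s1) :
    cost π ((σ.1, C / (s1 : ℝ)), (σ.2, C / (s2 : ℝ))) ≤ 3 * C := by
  have hσC : cost1 π σ.1 σ.2 = C := by
    by_cases htriv : ∀ i j, π i = π j
    · rw [hσt htriv]
      refine cost1_eq_of_isLeast_of_le hC le_rfl ?_
      rw [cost1_eq_zero_of_forall_eq π _ fun i => htriv i _]
      exact nonneg_of_isLeast_cost1 hC
    · push Not at htriv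
      exact (hσnt htriv).cost1_eq_of_isLeast hC
  have hC0 : 0 ≤ C := nonneg_of_isLeast_cost1 hC
  subst hs1 hs2
  calc cost π ((σ.1, C / _), (σ.2, C / _))
      ≤ cost1 π σ.1 σ.2 + _ * |C / _| + _ * |C / _| := cost_le_cost1_add π _ _ _ _
    _ ≤ C + C + C := by
        rw [hσC, abs_of_nonneg (by positivity), abs_of_nonneg (by positivity)]
        gcongr <;> exact natCast_mul_div_le _ hC0
    _ = 3 * C := by ring
end

section
/- Let p, q ∈ ℝ² with p₂ > 0 and q₂ > 0, and let z ≥ 0 satisfy |p₁ − q₁| ≤ z. Then for every real x: min(1, p₂/(q₂ + z)) ≤ d(x, p)/d(x, q) ≤ max(1, (p₂ + z)/q₂), where d(x, r) = |x − r₁| + |r₂|. -/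
/- The lower bound is the upper bound with the roles of `p` and `q` exchanged:
`min 1 (p₂ / (q₂ + z))` is the reciprocal of `max 1 ((q₂ + z) / p₂)`, and the upper bound itself
follows from `|x - p₁| ≤ |x - q₁| + z`. -/

lemma div_le_max_one_of_le_add {u v a b z : ℝ} (hv : 0 ≤ v) (hb : 0 < b) (h : u ≤ v + z) :
    (u + a) / (v + b) ≤ max 1 ((a + z) / b) := by
  set M := max 1 ((a + z) / b)
  have hM : 1 ≤ M := le_max_left _ _
  have hMb : a + z ≤ M * b := (div_le_iff₀ hb).1 (le_max_right _ _)
  rw [div_le_iff₀ (by positivity)]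
  calc u + a ≤ v + (a + z) := by linarith
    _ ≤ M * v + M * b := add_le_add (le_mul_of_one_le_left hv hM) hMb
    _ = M * (v + b) := (mul_add M v b).symm

lemma min_one_inv_le_of_inv_le_max_one {α : Type*} [Field α] [LinearOrder α]
    [IsStrictOrderedRing α] {r y : α} (hr : 0 < r) (hy : 0 < y) (h : r⁻¹ ≤ max 1 y) :
    min 1 y⁻¹ ≤ r := by
  rw [min_le_iff, ← inv_le_one₀ hr, inv_le_comm₀ hy hr]
  exact le_max_iff.1 h

lemma dpt_pos (x : ℝ) {q : ℝ × ℝ} (hq : q.2 ≠ 0) : 0 < dpt x q :=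
  add_pos_of_nonneg_of_pos (abs_nonneg _) (abs_pos.2 hq)

lemma dpt_div_dpt_le_max_one {p q : ℝ × ℝ} {z : ℝ} (hq : q.2 ≠ 0) (hpq : |p.1 - q.1| ≤ z)
    (x : ℝ) : dpt x p / dpt x q ≤ max 1 ((|p.2| + z) / |q.2|) := by
  refine div_le_max_one_of_le_add (abs_nonneg _) (abs_pos.2 hq) ?_
  calc |x - p.1| ≤ |x - q.1| + |q.1 - p.1| := abs_sub_le x q.1 p.1
    _ ≤ |x - q.1| + z := by rw [abs_sub_comm] at hpq; gcongr

theorem stmt14_general (p q : ℝ × ℝ) (hp : 0 < p.2) (hq : 0 < q.2)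
    (z : ℝ) (hpq : |p.1 - q.1| ≤ z) (x : ℝ) :
    min 1 (p.2 / (q.2 + z)) ≤ dpt x p / dpt x q ∧
    dpt x p / dpt x q ≤ max 1 ((p.2 + z) / q.2) := by
  have hz : 0 ≤ z := (abs_nonneg _).trans hpq
  have upper := dpt_div_dpt_le_max_one hq.ne' hpq x
  have upper_swap := dpt_div_dpt_le_max_one hp.ne' (abs_sub_comm p.1 q.1 ▸ hpq) x
  rw [abs_of_pos hp, abs_of_pos hq] at upper upper_swap
  refine ⟨?_, upper⟩
  rw [← inv_div (q.2 + z)]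
  refine min_one_inv_le_of_inv_le_max_one
    (div_pos (dpt_pos x hp.ne') (dpt_pos x hq.ne')) (by positivity) ?_
  rwa [inv_div]

theorem stmt14 (p q : ℝ × ℝ) (hp : 0 < p.2) (hq : 0 < q.2)
    (z : ℝ) (hz : 0 ≤ z) (hpq : |p.1 - q.1| ≤ z) (x : ℝ) :
    min 1 (p.2 / (q.2 + z)) ≤ dpt x p / dpt x q ∧
    dpt x p / dpt x q ≤ max 1 ((p.2 + z) / q.2) :=
  stmt14_general p q hp hq z hpq x
end

section
/- Let I be a closed interval and u, v : I → ℝ be continuous on I and differentiable on the interior of I. Assume |u′(x)| ≤ κ₁ for all interior x, and |v′(x)| ≤ κ₂ for all interior x with u(x) ≥ v(x). Then x ↦ min(u(x), v(x)) is max(κ₁, κ₂)-Lipschitz on I. -/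
/-!
Let `T` be the set of points of `[a, b]` where `u ≤ v`, i.e. where `u` is the active branch.
If `T` is empty, `min u v = v` on `[a, b]` and the bound on `v'` applies throughout. Otherwise
`T` is compact; with `c = inf T` and `d = sup T`, `v` is active on `[a, c]` and on `[d, b]`
(at `c` and `d` by continuity), and `min u v = u` at `c` and `d`. The mean value theorem on the
three pieces gives slopes at most `κ₂`, `κ₁`, `κ₂`, which add up to the claim.
-/

open Set

theorem abs_sub_le_mul_of_abs_hasDerivAt_le {f f' : ℝ → ℝ} {κ s t : ℝ} (hst : s ≤ t)
    (hf : ContinuousOn f (Icc s t)) (hf' : ∀ x ∈ Ioo s t, HasDerivAt f (f' x) x)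
    (hκ : ∀ x ∈ Ioo s t, |f' x| ≤ κ) :
    |f t - f s| ≤ κ * (t - s) := by
  rcases hst.eq_or_lt with rfl | hlt
  · simp
  obtain ⟨c, hc, hslope⟩ := exists_hasDerivAt_eq_slope f f' hlt hf hf'
  have hpos : 0 < t - s := sub_pos.mpr hlt
  have := hκ c hc
  rwa [hslope, abs_div, abs_of_pos hpos, div_le_iff₀ hpos] at this

theorem abs_min_sub_min_le_of_le_on_Ioo {u v v' : ℝ → ℝ} {κ s t : ℝ} (hst : s ≤ t)
    (hu : ContinuousOn u (Icc s t)) (hv : ContinuousOn v (Icc s t))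
    (hv' : ∀ x ∈ Ioo s t, HasDerivAt v (v' x) x) (hκ : ∀ x ∈ Ioo s t, |v' x| ≤ κ)
    (hvu : ∀ x ∈ Ioo s t, v x ≤ u x) :
    |min (u t) (v t) - min (u s) (v s)| ≤ κ * (t - s) := by
  rcases hst.eq_or_lt with rfl | hlt
  · simp
  have hclosure : closure (Ioo s t) = Icc s t := closure_Ioo hlt.ne
  have hvu' : ∀ x ∈ Icc s t, v x ≤ u x := by
    rw [← hclosure]
    exact le_on_closure hvu (hclosure ▸ hv) (hclosure ▸ hu)
  rw [min_eq_right (hvu' t (right_mem_Icc.mpr hst)), min_eq_right (hvu' s (left_mem_Icc.mpr hst))]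
  exact abs_sub_le_mul_of_abs_hasDerivAt_le hst hv hv' hκ

theorem abs_min_sub_min_le_max_mul {u v u' v' : ℝ → ℝ} {κ₁ κ₂ a b : ℝ} (hab : a ≤ b)
    (hu : ContinuousOn u (Icc a b)) (hv : ContinuousOn v (Icc a b))
    (hu' : ∀ x ∈ Ioo a b, HasDerivAt u (u' x) x) (hv' : ∀ x ∈ Ioo a b, HasDerivAt v (v' x) x)
    (hκ₁ : ∀ x ∈ Ioo a b, |u' x| ≤ κ₁) (hκ₂ : ∀ x ∈ Ioo a b, v x ≤ u x → |v' x| ≤ κ₂) :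
    |min (u b) (v b) - min (u a) (v a)| ≤ max κ₁ κ₂ * (b - a) := by
  have hv_active : ∀ s t, a ≤ s → s ≤ t → t ≤ b → (∀ x ∈ Ioo s t, v x ≤ u x) →
      |min (u t) (v t) - min (u s) (v s)| ≤ κ₂ * (t - s) := by
    intro s t has hst htb hvu
    have hIcc : Icc s t ⊆ Icc a b := Icc_subset_Icc has htb
    have hIoo : Ioo s t ⊆ Ioo a b := Ioo_subset_Ioo has htb
    exact abs_min_sub_min_le_of_le_on_Ioo hst (hu.mono hIcc) (hv.mono hIcc)
      (fun x hx => hv' x (hIoo hx)) (fun x hx => hκ₂ x (hIoo hx) (hvu x hx)) hvu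
  set T := {x ∈ Icc a b | u x ≤ v x}
  have hvu_of_notMem : ∀ x ∈ Icc a b, x ∉ T → v x ≤ u x := fun x hx hxT =>
    (not_le.mp fun h => hxT ⟨hx, h⟩).le
  rcases T.eq_empty_or_nonempty with hT | hT
  · calc |min (u b) (v b) - min (u a) (v a)| ≤ κ₂ * (b - a) :=
          hv_active a b le_rfl hab le_rfl fun x hx =>
            hvu_of_notMem x (Ioo_subset_Icc_self hx) (hT ▸ notMem_empty x)
      _ ≤ max κ₁ κ₂ * (b - a) := mul_le_mul_of_nonneg_right (le_max_right _ _) (sub_nonneg.mpr hab)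
  have hTclosed : IsClosed T := isClosed_Icc.isClosed_le hu hv
  have hTbdd : BddBelow T ∧ BddAbove T := ⟨⟨a, fun x hx => hx.1.1⟩, ⟨b, fun x hx => hx.1.2⟩⟩
  set c := sInf T
  set d := sSup T
  have hcT : c ∈ T := hTclosed.csInf_mem hT hTbdd.1
  have hdT : d ∈ T := hTclosed.csSup_mem hT hTbdd.2
  have hcd : c ≤ d := csInf_le_csSup hT hTbdd.1 hTbdd.2
  have hac : a ≤ c := hcT.1.1
  have hdb : d ≤ b := hdT.1.2
  have hleft : |min (u c) (v c) - min (u a) (v a)| ≤ κ₂ * (c - a) :=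
    hv_active a c le_rfl hac (hcd.trans hdb) fun x hx =>
      hvu_of_notMem x ⟨hx.1.le, hx.2.le.trans (hcd.trans hdb)⟩ (notMem_of_lt_csInf hx.2 hTbdd.1)
  have hmid : |min (u d) (v d) - min (u c) (v c)| ≤ κ₁ * (d - c) := by
    rw [min_eq_left hdT.2, min_eq_left hcT.2]
    exact abs_sub_le_mul_of_abs_hasDerivAt_le hcd (hu.mono (Icc_subset_Icc hac hdb))
      (fun x hx => hu' x (Ioo_subset_Ioo hac hdb hx))
      (fun x hx => hκ₁ x (Ioo_subset_Ioo hac hdb hx))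
  have hright : |min (u b) (v b) - min (u d) (v d)| ≤ κ₂ * (b - d) :=
    hv_active d b (hac.trans hcd) hdb le_rfl fun x hx =>
      hvu_of_notMem x ⟨(hac.trans hcd).trans hx.1.le, hx.2.le⟩ (notMem_of_csSup_lt hx.1 hTbdd.2)
  calc |min (u b) (v b) - min (u a) (v a)|
      ≤ |min (u b) (v b) - min (u d) (v d)| + |min (u d) (v d) - min (u c) (v c)|
        + |min (u c) (v c) - min (u a) (v a)| := by
        refine (abs_sub_le _ (min (u c) (v c)) _).trans ?_
        gcongr
        exact abs_sub_le _ _ _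
    _ ≤ κ₂ * (b - d) + κ₁ * (d - c) + κ₂ * (c - a) := by gcongr
    _ ≤ max κ₁ κ₂ * (b - d) + max κ₁ κ₂ * (d - c) + max κ₁ κ₂ * (c - a) := by
        gcongr <;> first | linarith | exact le_max_left _ _ | exact le_max_right _ _
    _ = max κ₁ κ₂ * (b - a) := by ring

theorem stmt16 (a b : ℝ) (u v u' v' : ℝ → ℝ) (κ1 κ2 : ℝ)
    (hu : ContinuousOn u (Set.Icc a b)) (hv : ContinuousOn v (Set.Icc a b))
    (hud : ∀ x ∈ Set.Ioo a b, HasDerivAt u (u' x) x)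
    (hvd : ∀ x ∈ Set.Ioo a b, HasDerivAt v (v' x) x)
    (hb1 : ∀ x ∈ Set.Ioo a b, |u' x| ≤ κ1)
    (hb2 : ∀ x ∈ Set.Ioo a b, v x ≤ u x → |v' x| ≤ κ2) :
    ∀ x ∈ Set.Icc a b, ∀ y ∈ Set.Icc a b,
      |min (u x) (v x) - min (u y) (v y)| ≤ max κ1 κ2 * |x - y| := by
  have hmono : ∀ x ∈ Icc a b, ∀ y ∈ Icc a b, x ≤ y →
      |min (u y) (v y) - min (u x) (v x)| ≤ max κ1 κ2 * (y - x) := by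
    intro x hx y hy hxy
    have hIcc : Icc x y ⊆ Icc a b := Icc_subset_Icc hx.1 hy.2
    have hIoo : Ioo x y ⊆ Ioo a b := Ioo_subset_Ioo hx.1 hy.2
    exact abs_min_sub_min_le_max_mul hxy (hu.mono hIcc) (hv.mono hIcc)
      (fun z hz => hud z (hIoo hz)) (fun z hz => hvd z (hIoo hz))
      (fun z hz => hb1 z (hIoo hz)) (fun z hz => hb2 z (hIoo hz))
  intro x hx y hy
  rcases le_total x y with hxy | hyx
  · rw [abs_sub_comm, abs_sub_comm x, abs_of_nonneg (sub_nonneg.mpr hxy)]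
    exact hmono x hx y hy hxy
  · rw [abs_of_nonneg (sub_nonneg.mpr hyx)]
    exact hmono y hy x hx hyx
end

section
/- Let π and π* be distinct n-profiles (nondecreasing vectors). Then there exists an index i ∈ [n] such that πᵢ ≠ πᵢ*, and replacing πᵢ by πᵢ* keeps the vector nondecreasing (i.e., πᵢ* ∈ [π_{i−1}, π_{i+1}], with the conventions π₀ = −∞ and π_{n+1} = +∞). -/
/-!
Take the first index `m` at which `π'` drops strictly below `π`. Left of `m` we have
`π ≤ π'`, so `π j ≤ π' j ≤ π' m`; right of `m`, `π' m < π m ≤ π j`. Hence `π' m` fits into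
the slot of `π` at `m`. If `π'` never drops below `π`, it rises above it somewhere, and the
order-dual argument applies at the last such index.
-/

variable {ι α : Type*} [LinearOrder ι] [LinearOrder α]

theorem Monotone.update_of_le_of_ge {f : ι → α} (hf : Monotone f) {i : ι} {c : α}
    (hlt : ∀ j < i, f j ≤ c) (hgt : ∀ j, i < j → c ≤ f j) :
    Monotone (Function.update f i c) := by
  intro a b hab
  rcases eq_or_ne a i with rfl | ha
  · rcases eq_or_ne b a with rfl | hb
    · exact le_rfl
    · rw [Function.update_self, Function.update_of_ne hb]
      exact hgt b (hab.lt_of_ne' hb)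
  · rw [Function.update_of_ne ha]
    rcases eq_or_ne b i with rfl | hb
    · rw [Function.update_self]
      exact hlt a (hab.lt_of_ne ha)
    · rw [Function.update_of_ne hb]
      exact hf hab

theorem Monotone.exists_update_of_exists_lt [WellFoundedLT ι] {π π' : ι → α}
    (hπ : Monotone π) (hπ' : Monotone π') (h : ∃ i, π' i < π i) :
    ∃ i, π' i < π i ∧ Monotone (Function.update π i (π' i)) := by
  obtain ⟨m, hm⟩ := exists_minimal_of_wellFoundedLT _ h
  refine ⟨m, hm.prop, hπ.update_of_le_of_ge (fun j hj => ?_) fun j hj => ?_⟩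
  · exact (not_lt.mp (hm.not_prop_of_lt hj)).trans (hπ' hj.le)
  · exact hm.prop.le.trans (hπ hj.le)

theorem Monotone.exists_update_of_exists_gt [WellFoundedGT ι] {π π' : ι → α}
    (hπ : Monotone π) (hπ' : Monotone π') (h : ∃ i, π i < π' i) :
    ∃ i, π i < π' i ∧ Monotone (Function.update π i (π' i)) := by
  obtain ⟨k, hk, hmono⟩ :=
    Monotone.exists_update_of_exists_lt (ι := ιᵒᵈ) (α := αᵒᵈ) hπ.dual hπ'.dual h
  exact ⟨k, hk, fun a b hab => hmono (OrderDual.toDual_le_toDual.mpr hab)⟩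

theorem stmt17 {n : ℕ} (π π' : Fin n → ℝ) (hπ : Monotone π) (hπ' : Monotone π')
    (hne : π ≠ π') :
    ∃ i : Fin n, π i ≠ π' i ∧ Monotone (Function.update π i (π' i)) := by
  obtain ⟨i, hi⟩ := Function.ne_iff.mp hne
  rcases hi.lt_or_gt with hlt | hgt
  · obtain ⟨k, hk, hmono⟩ := hπ.exists_update_of_exists_gt hπ' ⟨i, hlt⟩
    exact ⟨k, hk.ne, hmono⟩
  · obtain ⟨m, hm, hmono⟩ := hπ.exists_update_of_exists_lt hπ' ⟨i, hgt⟩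
    exact ⟨m, hm.ne', hmono⟩
end

section
/- The mechanism M₁ that outputs the lexicographically first optimal 1-D two-facility solution is not λ-strategyproof for any constant λ: for every λ > 0 there exist a 4-profile π, an agent i, and a misreport x such that d(πᵢ, M₁(π)) ≥ λ·d(πᵢ, M₁(π′)) where π′ is π with component i replaced by x (re-sorted). Concretely, for z > 2ελ and π = (−z, 0, 0, z+ε), agent 1 misreporting −z−2ε reduces its service distance from z to 2ε. -/
def serviceDist (a b x : ℝ) : ℝ := min |x - a| |x - b|

namespace serviceDist

lemma nonneg (a b x : ℝ) : 0 ≤ serviceDist a b x :=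
  le_min (abs_nonneg _) (abs_nonneg _)

lemma eq_or (a b x : ℝ) : serviceDist a b x = |x - a| ∨ serviceDist a b x = |x - b| :=
  min_choice _ _

lemma eq_zero_iff {a b x : ℝ} : serviceDist a b x = 0 ↔ x = a ∨ x = b := by
  rw [← (nonneg a b x).ge_iff_eq']
  simp only [serviceDist, min_le_iff, abs_nonpos_iff, sub_eq_zero]

lemma eq_sub_of_le_left {a b x : ℝ} (hxa : x ≤ a) (hab : a ≤ b) : serviceDist a b x = a - x := by
  rw [serviceDist, abs_of_nonpos (by linarith), abs_of_nonpos (by linarith),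
    min_eq_left (by linarith)]
  ring

lemma eq_sub_of_right_le {a b x : ℝ} (hab : a ≤ b) (hbx : b ≤ x) : serviceDist a b x = x - b := by
  rw [serviceDist, abs_of_nonneg (by linarith), abs_of_nonneg (by linarith),
    min_eq_right (by linarith)]

lemma neg (a b x : ℝ) : serviceDist (-b) (-a) (-x) = serviceDist a b x := by
  simp only [serviceDist, min_comm |x - a|]
  congr 1 <;> rw [← abs_neg] <;> ring_nf

end serviceDist

open serviceDist

lemma cost1_vec_four (u v w a b : ℝ) :
    cost1 ![u, v, v, w] a b = serviceDist a b u + 2 * serviceDist a b v + serviceDist a b w := by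
  simp only [cost1, serviceDist, Fin.sum_univ_four, Matrix.cons_val]
  ring

lemma sub_le_abs_sub_add_abs_sub (x y c : ℝ) : y - x ≤ |x - c| + |y - c| := by
  linarith [neg_abs_le (x - c), le_abs_self (y - c)]

lemma eq_of_cost_le_left {u v w a b : ℝ} (hlt : v - u < w - v) (hab : a ≤ b)
    (h : serviceDist a b u + 2 * serviceDist a b v + serviceDist a b w ≤ v - u) :
    a = v ∧ b = w := by
  have hu0 := nonneg a b u
  have hv0 := nonneg a b v
  have hw0 := nonneg a b w
  -- Points served by the same facility pay at least their distance; whichever of `a`, `b`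
  -- serves each of `u`, `v`, `w`, this leaves nothing for `v` and `w` to pay.
  have hvw : serviceDist a b v + serviceDist a b w ≤ 0 := by
    have := sub_le_abs_sub_add_abs_sub u v a
    have := sub_le_abs_sub_add_abs_sub u v b
    have := sub_le_abs_sub_add_abs_sub v w a
    have := sub_le_abs_sub_add_abs_sub v w b
    have := sub_le_abs_sub_add_abs_sub u w a
    have := sub_le_abs_sub_add_abs_sub u w b
    rcases eq_or a b u with hu | hu <;> rcases eq_or a b v with hv | hv <;>
      rcases eq_or a b w with hw | hw <;> linarith
  have hv_mem := eq_zero_iff.1 (by linarith : serviceDist a b v = 0)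
  have hw_mem := eq_zero_iff.1 (by linarith : serviceDist a b w = 0)
  rcases hv_mem with rfl | rfl <;> rcases hw_mem with rfl | rfl <;> constructor <;> linarith

lemma eq_of_cost_le_right {u v w a b : ℝ} (hlt : w - v < v - u) (hab : a ≤ b)
    (h : serviceDist a b u + 2 * serviceDist a b v + serviceDist a b w ≤ w - v) :
    a = u ∧ b = v := by
  rw [← neg a b u, ← neg a b v, ← neg a b w] at h
  have := eq_of_cost_le_left (u := -w) (v := -v) (w := -u) (by linarith) (neg_le_neg hab)
    (by linarith)
  constructor <;> linarith

lemma LexOpt.eq_of_forall_cost_le {n : ℕ} {π : Fin n → ℝ} {σ p : ℝ × ℝ} (hσ : LexOpt π σ)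
    (hp : p.1 ≤ p.2) (huniq : ∀ a b, a ≤ b → cost1 π a b ≤ cost1 π p.1 p.2 → (a, b) = p) :
    σ = p :=
  huniq _ _ hσ.1 (hσ.2.1 _ _ hp)

lemma LexOpt.eq_of_sub_lt_sub {u v w : ℝ} {σ : ℝ × ℝ} (huv : u ≤ v) (hlt : v - u < w - v)
    (hσ : LexOpt ![u, v, v, w] σ) : σ = (v, w) := by
  have hvw : v ≤ w := by linarith
  refine hσ.eq_of_forall_cost_le hvw fun a b hab h => ?_
  rw [cost1_vec_four, cost1_vec_four, eq_sub_of_le_left huv hvw,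
    eq_zero_iff.2 (.inl rfl), eq_zero_iff.2 (.inr rfl)] at h
  obtain ⟨rfl, rfl⟩ := eq_of_cost_le_left hlt hab (by linarith)
  rfl

lemma LexOpt.eq_of_sub_gt_sub {u v w : ℝ} {σ : ℝ × ℝ} (hvw : v ≤ w) (hlt : w - v < v - u)
    (hσ : LexOpt ![u, v, v, w] σ) : σ = (u, v) := by
  have huv : u ≤ v := by linarith
  refine hσ.eq_of_forall_cost_le huv fun a b hab h => ?_
  rw [cost1_vec_four, cost1_vec_four, eq_zero_iff.2 (.inl rfl), eq_zero_iff.2 (.inr rfl),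
    eq_sub_of_right_le huv hvw] at h
  obtain ⟨rfl, rfl⟩ := eq_of_cost_le_right hlt hab (by linarith)
  rfl

lemma monotone_vec_four {p q r s : ℝ} (hpq : p ≤ q) (hqr : q ≤ r) (hrs : r ≤ s) :
    Monotone ![p, q, r, s] := by
  refine Fin.monotone_iff_le_succ.2 fun i => ?_
  fin_cases i <;> assumption

theorem stmt19 (lam : ℝ) (hlam : 0 < lam) :
    ∃ (π π' : Fin 4 → ℝ), Monotone π ∧ Monotone π' ∧
      ∃ (i : Fin 4) (x : ℝ),
        (∃ e : Equiv.Perm (Fin 4), π' = Function.update π i x ∘ e) ∧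
        ∀ σ σ' : ℝ × ℝ, LexOpt π σ → LexOpt π' σ' →
          min |π i - σ.1| |π i - σ.2| ≥ lam * min |π i - σ'.1| |π i - σ'.2| := by
  set z := 2 * lam
  have hz : 0 ≤ z := by positivity
  refine ⟨![-z, 0, 0, z + 1], ![-z - 2, 0, 0, z + 1], monotone_vec_four (by linarith) le_rfl
    (by linarith), monotone_vec_four (by linarith) le_rfl (by linarith), 0, -z - 2,
    ⟨1, by ext i; fin_cases i <;> rfl⟩, fun σ σ' hσ hσ' => ?_⟩
  obtain rfl := hσ.eq_of_sub_lt_sub (by linarith) (by linarith)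
  obtain rfl := hσ'.eq_of_sub_gt_sub (by linarith) (by linarith)
  change serviceDist 0 (z + 1) (-z) ≥ lam * serviceDist (-z - 2) 0 (-z)
  have hgain : serviceDist (-z - 2) 0 (-z) ≤ 2 := (min_le_left _ _).trans_eq (by norm_num)
  rw [eq_sub_of_le_left (by linarith) (by linarith)]
  calc lam * serviceDist (-z - 2) 0 (-z) ≤ lam * 2 := mul_le_mul_of_nonneg_left hgain hlam.le
    _ = 0 - -z := by ring
end
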